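/- Let X be open in a complex Banach space 𝒳 and ℰ a complex Hilbert space, and let h : X → GL⁺(ℰ) be smooth. Then there exists a unique connection form A ∈ Ω¹(X, B(ℰ)) such that (i) A_x is ℂ-linear for every x (compatibility with complex structure) and (ii) d_x h = h_x A_x(·) + A_x(·)* h_x for every x (compatibility with the Hermitian structure h); it is given by A_x = h_x^{-1} (∂h)_x, where ∂h denotes the ℂ-linear part of dh. -/

import Mathlib

open ContinuousLinearMap

/-- existence and uniqueness of the Chern connection form on a trivial
bundle: the unique connection form compatible with the complex structure (ℂ-linear)
and with the Hermitian structure h, given by A_x = h_x⁻¹ (∂h)_x. -/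
theorem stmt_9 {𝒳 E : Type*} [NormedAddCommGroup 𝒳] [NormedSpace ℂ 𝒳]
    [NormedAddCommGroup E] [InnerProductSpace ℂ E] [CompleteSpace E]
    {X : Set 𝒳} (hX : IsOpen X)
    (h : 𝒳 → (E →L[ℂ] E)) (hh : ContDiffOn ℝ (⊤ : ℕ∞) h X)
    (hpos : ∀ x ∈ X, (h x).IsPositive ∧ IsUnit (h x)) :
    ∃ A : 𝒳 → (𝒳 →L[ℝ] (E →L[ℂ] E)),
      (∀ x ∈ X, ∀ v : 𝒳, A x (Complex.I • v) = Complex.I • A x v) ∧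
      (∀ x ∈ X, ∀ v : 𝒳, fderiv ℝ h x v = h x * A x v + star (A x v) * h x) ∧
      (∀ x ∈ X, ∀ v : 𝒳, A x v = Ring.inverse (h x) *
        ((2 : ℂ)⁻¹ • (fderiv ℝ h x v - Complex.I • fderiv ℝ h x (Complex.I • v)))) ∧
      ∀ A' : 𝒳 → (𝒳 →L[ℝ] (E →L[ℂ] E)),
        (∀ x ∈ X, ∀ v : 𝒳, A' x (Complex.I • v) = Complex.I • A' x v) →
        (∀ x ∈ X, ∀ v : 𝒳, fderiv ℝ h x v = h x * A' x v + star (A' x v) * h x) →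
        ∀ x ∈ X, ∀ v : 𝒳, A' x v = A x v := by
  classical
  -- the complex structure J : v ↦ I • v as a real CLM
  set J : 𝒳 →L[ℝ] 𝒳 :=
    ((Complex.I • ContinuousLinearMap.id ℂ 𝒳).restrictScalars ℝ) with hJ
  have hJv : ∀ v : 𝒳, J v = Complex.I • v := fun v => rfl
  -- the ∂ part of the derivative
  set P : 𝒳 → (𝒳 →L[ℝ] (E →L[ℂ] E)) := fun x =>
    (2 : ℂ)⁻¹ • (fderiv ℝ h x - Complex.I • (fderiv ℝ h x).comp J) with hP
  have hPv : ∀ x v, P x v =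
      (2 : ℂ)⁻¹ • (fderiv ℝ h x v - Complex.I • fderiv ℝ h x (Complex.I • v)) := by
    intro x v; simp [hP, hJv]
  -- the connection form
  set A : 𝒳 → (𝒳 →L[ℝ] (E →L[ℂ] E)) := fun x =>
    ((ContinuousLinearMap.mul ℂ (E →L[ℂ] E) (Ring.inverse (h x))).restrictScalars ℝ).comp
      (P x) with hA
  have hAv : ∀ x v, A x v = Ring.inverse (h x) * P x v := fun x v => rfl
  -- differentiability of h at points of X
  have hDh : ∀ x ∈ X, HasFDerivAt h (fderiv ℝ h x) x := by
    intro x hx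
    exact (((hh x hx).contDiffAt (hX.mem_nhds hx)).differentiableAt
      (by simp)).hasFDerivAt
  -- self-adjointness of h on X
  have hsa : ∀ x ∈ X, star (h x) = h x := fun x hx => (hpos x hx).1.isSelfAdjoint
  -- self-adjointness of the derivative on X
  have hDsa : ∀ x ∈ X, ∀ v, star (fderiv ℝ h x v) = fderiv ℝ h x v := by
    intro x hx v
    have h1 : HasFDerivAt (fun y => star (h y))
        (((starL' ℝ : (E →L[ℂ] E) ≃L[ℝ] (E →L[ℂ] E)) : _ →L[ℝ] _) ∘L fderiv ℝ h x) x :=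
      (hDh x hx).star
    have h2 : (fun y => star (h y)) =ᶠ[nhds x] h :=
      Filter.eventuallyEq_of_mem (hX.mem_nhds hx) (fun y hy => hsa y hy)
    have h3 : HasFDerivAt h
        (((starL' ℝ : (E →L[ℂ] E) ≃L[ℝ] (E →L[ℂ] E)) : _ →L[ℝ] _) ∘L fderiv ℝ h x) x :=
      h1.congr_of_eventuallyEq h2.symm
    have h4 := h3.unique (hDh x hx)
    have := congrArg (fun T : 𝒳 →L[ℝ] (E →L[ℂ] E) => T v) h4
    simpa using this
  -- star of P is the ∂̄ part
  have hPstar : ∀ x ∈ X, ∀ v, star (P x v) =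
      (2 : ℂ)⁻¹ • (fderiv ℝ h x v + Complex.I • fderiv ℝ h x (Complex.I • v)) := by
    intro x hx v
    rw [hPv]
    rw [star_smul, star_sub, star_smul, hDsa x hx, hDsa x hx]
    simp [sub_neg_eq_add]
  -- P is I-linear
  have hPI : ∀ x, ∀ v : 𝒳, P x (Complex.I • v) = Complex.I • P x v := by
    intro x v
    rw [hPv, hPv]
    have : Complex.I • Complex.I • v = -v := by
      rw [smul_smul, Complex.I_mul_I, neg_one_smul]
    rw [this, map_neg, smul_neg, sub_neg_eq_add, smul_comm Complex.I ((2:ℂ)⁻¹)]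
    congr 1
    rw [smul_sub, smul_smul, Complex.I_mul_I, neg_one_smul, sub_neg_eq_add, add_comm]
  -- key cancellations
  refine ⟨A, ?_, ?_, ?_, ?_⟩
  · intro x hx v
    rw [hAv, hAv, hPI, mul_smul_comm]
  · intro x hx v
    have hu := (hpos x hx).2
    have hinv_sa : star (Ring.inverse (h x)) = Ring.inverse (h x) := by
      rw [← Ring.inverse_star, hsa x hx]
    rw [hAv, star_mul, hinv_sa, ← mul_assoc, Ring.mul_inverse_cancel _ hu, one_mul,
      mul_assoc, Ring.inverse_mul_cancel _ hu, mul_one, hPstar x hx, hPv]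
    rw [← smul_add]
    have : fderiv ℝ h x v - Complex.I • fderiv ℝ h x (Complex.I • v) +
        (fderiv ℝ h x v + Complex.I • fderiv ℝ h x (Complex.I • v)) =
        (2 : ℂ) • fderiv ℝ h x v := by
      rw [two_smul]; abel
    rw [this, smul_smul, inv_mul_cancel₀ (two_ne_zero), one_smul]
  · intro x hx v
    rw [hAv, hPv]
  · intro A' hI' heq' x hx v
    have hu := (hpos x hx).2
    have e1 := heq' x hx v
    have e2 := heq' x hx (Complex.I • v)
    rw [hI' x hx v, star_smul, Complex.star_def, Complex.conj_I, mul_smul_comm,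
      neg_smul, neg_mul, smul_mul_assoc] at e2
    -- e2 : fderiv ℝ h x (I • v) = I • (h x * A' x v) + - (I • (star (A' x v) * h x))
    have key : fderiv ℝ h x v - Complex.I • fderiv ℝ h x (Complex.I • v) =
        (2 : ℂ) • (h x * A' x v) := by
      rw [e1, e2, smul_add, smul_neg, smul_smul, Complex.I_mul_I, neg_one_smul,
        smul_smul, Complex.I_mul_I, neg_one_smul, two_smul]
      abel
    rw [hAv, hPv, key, smul_smul, inv_mul_cancel₀ (two_ne_zero), one_smul,
      ← mul_assoc, Ring.inverse_mul_cancel _ hu, one_mul]
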